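/- arXiv:1909.01853 — 2 statements merged into one kernel-verified Lean document; each statement's English description precedes it below -/
import Mathlib

section
/- Constant-free reliability bound (weak-form version of the paper's Theorem on the equilibrated estimator): Let Ω ⊆ ℝ³ be open, let μ : Ω → ℝ be measurable with 0 < μ₀ ≤ μ(x) ≤ μ₁ for almost every x ∈ Ω, and let H, H_h, H̃, j : Ω → ℝ³ be locally integrable vector fields such that both H and H̃ have weak curl j in Ω (i.e. H̃ satisfies the equilibrium condition curl H̃ = j weakly). Suppose e : ℝ³ → ℝ³ is continuously differentiable with compact support contained in Ω, μ·(H − H_h) = curl e almost everywhere in Ω, and ∫_Ω μ|H̃ − H|² dx < ∞. Then ∫_Ω μ|H − H_h|² dx ≤ ∫_Ω μ|H̃ − H_h|² dx, and both integrals are finite. -/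
open MeasureTheory

/-- Partial derivative of a scalar function on ℝ³ in direction `i`. -/
noncomputable def pd3 (f : (Fin 3 → ℝ) → ℝ) (i : Fin 3) (x : Fin 3 → ℝ) : ℝ :=
  fderiv ℝ f x (Pi.single i 1)

/-- The curl of a vector field on ℝ³. -/
noncomputable def curl3 (F : (Fin 3 → ℝ) → (Fin 3 → ℝ)) (x : Fin 3 → ℝ) : Fin 3 → ℝ :=
  ![pd3 (fun y => F y 2) 1 x - pd3 (fun y => F y 1) 2 x,
    pd3 (fun y => F y 0) 2 x - pd3 (fun y => F y 2) 0 x,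
    pd3 (fun y => F y 1) 0 x - pd3 (fun y => F y 0) 1 x]

/-- Euclidean dot product on ℝ³. -/
def dot3 (a b : Fin 3 → ℝ) : ℝ := ∑ i, a i * b i

/-- `G` has weak curl `g` in the open set `Ω`: for every continuously differentiable
vector field `w` with compact support contained in `Ω`, the integrands `G ⬝ curl w` and
`g ⬝ w` are integrable on `Ω` and `∫_Ω G ⬝ curl w = ∫_Ω g ⬝ w`. -/
def HasWeakCurlOn (G g : (Fin 3 → ℝ) → (Fin 3 → ℝ)) (Ω : Set (Fin 3 → ℝ)) : Prop :=
  ∀ w : (Fin 3 → ℝ) → (Fin 3 → ℝ),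
    ContDiff ℝ 1 w → HasCompactSupport w → tsupport w ⊆ Ω →
      IntegrableOn (fun x => dot3 (G x) (curl3 w x)) Ω volume ∧
      IntegrableOn (fun x => dot3 (g x) (w x)) Ω volume ∧
      ∫ x in Ω, dot3 (G x) (curl3 w x) = ∫ x in Ω, dot3 (g x) (w x)

/-! Write `μ|H̃ - Hh|² = μ|H̃ - H|² + 2 (H̃ - H)·(μ(H - Hh)) + μ|H - Hh|²` and use
`μ(H - Hh) = curl e`. Since `H̃ - H` has weak curl `0` and `e` is an admissible test field,
the cross term integrates to zero (a Prager–Synge type identity), and dropping the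
nonnegative term `μ|H̃ - H|²` gives the bound. Integrability of `μ|H - Hh|²` comes from
`μ|H - Hh|² ≤ μ₀⁻¹|curl e|²`. -/

open Topology

lemma dot3_self_nonneg (v : Fin 3 → ℝ) : 0 ≤ dot3 v v :=
  Finset.sum_nonneg fun _ _ => mul_self_nonneg _

lemma dot3_zero_left (b : Fin 3 → ℝ) : dot3 0 b = 0 := by
  simp [dot3]

lemma dot3_sub_left (a b c : Fin 3 → ℝ) : dot3 (a - b) c = dot3 a c - dot3 b c := by
  simp only [dot3, Pi.sub_apply, sub_mul, Finset.sum_sub_distrib]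

lemma dot3_smul_right (m : ℝ) (a b : Fin 3 → ℝ) : dot3 a (m • b) = m * dot3 a b := by
  simp only [dot3, Pi.smul_apply, smul_eq_mul, Finset.mul_sum]
  exact Finset.sum_congr rfl fun _ _ => by ring

lemma dot3_smul_left (m : ℝ) (a b : Fin 3 → ℝ) : dot3 (m • a) b = m * dot3 a b := by
  simp only [dot3, Pi.smul_apply, smul_eq_mul, Finset.mul_sum, mul_assoc]

lemma mul_dot3_sub_self_eq (m : ℝ) (a b c : Fin 3 → ℝ) :
    m * dot3 (a - c) (a - c)
      = m * dot3 (a - b) (a - b) + 2 * dot3 (a - b) (m • (b - c))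
        + m * dot3 (b - c) (b - c) := by
  simp only [dot3, Fin.sum_univ_three, Pi.sub_apply, Pi.smul_apply, smul_eq_mul]
  ring

lemma mul_dot3_self_le {m m₀ : ℝ} (hm₀ : 0 < m₀) (hm : m₀ ≤ m) (v : Fin 3 → ℝ) :
    m * dot3 v v ≤ m₀⁻¹ * dot3 (m • v) (m • v) := by
  have hv := dot3_self_nonneg v
  rw [dot3_smul_left, dot3_smul_right, le_inv_mul_iff₀ hm₀]
  nlinarith [mul_le_mul_of_nonneg_right hm (mul_nonneg (hm₀.le.trans hm) hv)]

lemma ContDiff.continuous_pd3 {f : (Fin 3 → ℝ) → ℝ} (hf : ContDiff ℝ 1 f) (i : Fin 3) :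
    Continuous (pd3 f i) :=
  (hf.continuous_fderiv one_ne_zero).clm_apply continuous_const

lemma pd3_eq_zero_of_eventuallyEq_zero {f : (Fin 3 → ℝ) → ℝ} {x : Fin 3 → ℝ}
    (hf : f =ᶠ[𝓝 x] 0) (i : Fin 3) : pd3 f i x = 0 := by
  simp [pd3, hf.fderiv_eq]

lemma ContDiff.continuous_curl3 {F : (Fin 3 → ℝ) → Fin 3 → ℝ} (hF : ContDiff ℝ 1 F) :
    Continuous (curl3 F) := by
  have h := fun k i => (contDiff_pi.1 hF k).continuous_pd3 i
  unfold curl3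
  fun_prop

lemma HasCompactSupport.curl3 {F : (Fin 3 → ℝ) → Fin 3 → ℝ} (hF : HasCompactSupport F) :
    HasCompactSupport (curl3 F) := by
  refine HasCompactSupport.intro hF fun x hx => ?_
  have h k i : pd3 (fun y => F y k) i x = 0 :=
    pd3_eq_zero_of_eventuallyEq_zero
      ((notMem_tsupport_iff_eventuallyEq.1 hx).mono fun y hy => by simp [hy]) i
  ext i
  fin_cases i <;> simp [_root_.curl3, h]

lemma integrable_dot3_curl3_self {F : (Fin 3 → ℝ) → Fin 3 → ℝ} (hF : ContDiff ℝ 1 F)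
    (hFs : HasCompactSupport F) (ν : Measure (Fin 3 → ℝ)) [IsFiniteMeasureOnCompacts ν] :
    Integrable (fun x => dot3 (curl3 F x) (curl3 F x)) ν := by
  have hcurl := hF.continuous_curl3
  have hcont : Continuous fun x => dot3 (curl3 F x) (curl3 F x) := by
    unfold dot3; fun_prop
  exact hcont.integrable_of_hasCompactSupport
    (hFs.curl3.comp_left (g := fun v => dot3 v v) (dot3_zero_left 0))

lemma HasWeakCurlOn.sub {G₁ G₂ g₁ g₂ : (Fin 3 → ℝ) → Fin 3 → ℝ} {Ω : Set (Fin 3 → ℝ)}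
    (h₁ : HasWeakCurlOn G₁ g₁ Ω) (h₂ : HasWeakCurlOn G₂ g₂ Ω) :
    HasWeakCurlOn (G₁ - G₂) (g₁ - g₂) Ω := by
  intro w hw hws hwΩ
  obtain ⟨hG₁, hg₁, heq₁⟩ := h₁ w hw hws hwΩ
  obtain ⟨hG₂, hg₂, heq₂⟩ := h₂ w hw hws hwΩ
  simp only [Pi.sub_apply, dot3_sub_left]
  exact ⟨hG₁.sub hG₂, hg₁.sub hg₂, by rw [integral_sub hG₁ hG₂, integral_sub hg₁ hg₂, heq₁, heq₂]⟩

section WeightedEnergy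

variable {α : Type*} [MeasurableSpace α] {ν : Measure α}

lemma integrable_mul_dot3_self_of_ae_smul_eq {m : α → ℝ} {m₀ : ℝ} (hm₀ : 0 < m₀)
    (hm : ∀ᵐ x ∂ν, m₀ ≤ m x) {v g : α → Fin 3 → ℝ} (hv : AEStronglyMeasurable v ν)
    (hg : AEStronglyMeasurable g ν) (hgg : Integrable (fun x => dot3 (g x) (g x)) ν)
    (hvg : ∀ᵐ x ∂ν, m x • v x = g x) :
    Integrable (fun x => m x * dot3 (v x) (v x)) ν := by
  have hmeas : AEStronglyMeasurable (fun x => m x * dot3 (v x) (v x)) ν := by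
    refine (show AEStronglyMeasurable (fun x => dot3 (v x) (g x)) ν by
      unfold dot3; fun_prop).congr ?_
    filter_upwards [hvg] with x hx
    rw [← hx, dot3_smul_right]
  refine (hgg.const_mul m₀⁻¹).mono' hmeas ?_
  filter_upwards [hm, hvg] with x hx hvx
  rw [Real.norm_of_nonneg (mul_nonneg (hm₀.le.trans hx) (dot3_self_nonneg _)), ← hvx]
  exact mul_dot3_self_le hm₀ hx _

lemma integrable_and_integral_le_of_ae_eq_add {T A B D : α → ℝ} (hT : T =ᵐ[ν] A + B + D)
    (hA : Integrable A ν) (hA0 : 0 ≤ᵐ[ν] A) (hB : Integrable B ν) (hB0 : ∫ x, B x ∂ν = 0)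
    (hD : Integrable D ν) : Integrable T ν ∧ ∫ x, D x ∂ν ≤ ∫ x, T x ∂ν := by
  refine ⟨((hA.add hB).add hD).congr hT.symm, ?_⟩
  rw [integral_congr_ae hT, integral_add' (hA.add hB) hD, integral_add' hA hB, hB0]
  linarith [integral_nonneg_of_ae hA0]

end WeightedEnergy

theorem constant_free_reliability_general
    (Ω : Set (Fin 3 → ℝ)) (hΩ : IsOpen Ω)
    (μ : (Fin 3 → ℝ) → ℝ)
    (μ₀ μ₁ : ℝ) (hμ₀ : 0 < μ₀)
    (hbound : ∀ᵐ x ∂volume, x ∈ Ω → μ₀ ≤ μ x ∧ μ x ≤ μ₁)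
    (H Hh Ht j : (Fin 3 → ℝ) → (Fin 3 → ℝ))
    (hHloc : LocallyIntegrableOn H Ω volume)
    (hHhloc : LocallyIntegrableOn Hh Ω volume)
    (hH : HasWeakCurlOn H j Ω) (hHt : HasWeakCurlOn Ht j Ω)
    (e : (Fin 3 → ℝ) → (Fin 3 → ℝ))
    (he : ContDiff ℝ 1 e) (hesupp : HasCompactSupport e) (heΩ : tsupport e ⊆ Ω)
    (hrep : ∀ᵐ x ∂volume, x ∈ Ω → μ x • (H x - Hh x) = curl3 e x)
    (hfin : IntegrableOn (fun x => μ x * dot3 (Ht x - H x) (Ht x - H x)) Ω volume) :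
    IntegrableOn (fun x => μ x * dot3 (H x - Hh x) (H x - Hh x)) Ω volume ∧
    IntegrableOn (fun x => μ x * dot3 (Ht x - Hh x) (Ht x - Hh x)) Ω volume ∧
    ∫ x in Ω, μ x * dot3 (H x - Hh x) (H x - Hh x)
      ≤ ∫ x in Ω, μ x * dot3 (Ht x - Hh x) (Ht x - Hh x) := by
  have hμ : ∀ᵐ x ∂volume.restrict Ω, μ₀ ≤ μ x :=
    ((ae_restrict_iff' hΩ.measurableSet).2 hbound).mono fun _ hx => hx.1
  have hcurl : ∀ᵐ x ∂volume.restrict Ω, μ x • (H x - Hh x) = curl3 e x :=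
    (ae_restrict_iff' hΩ.measurableSet).2 hrep
  have hD : IntegrableOn (fun x => μ x * dot3 (H x - Hh x) (H x - Hh x)) Ω volume :=
    integrable_mul_dot3_self_of_ae_smul_eq hμ₀ hμ
      (hHloc.aestronglyMeasurable.sub hHhloc.aestronglyMeasurable)
      he.continuous_curl3.aestronglyMeasurable (integrable_dot3_curl3_self he hesupp _) hcurl
  obtain ⟨hB, -, hB0⟩ := (hHt.sub hH) e he hesupp heΩ
  simp only [Pi.sub_apply, sub_self, dot3_zero_left, integral_zero] at hB hB0
  have hA0 : 0 ≤ᵐ[volume.restrict Ω] fun x => μ x * dot3 (Ht x - H x) (Ht x - H x) :=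
    hμ.mono fun x hx => mul_nonneg (hμ₀.le.trans hx) (dot3_self_nonneg _)
  have hexpand : (fun x => μ x * dot3 (Ht x - Hh x) (Ht x - Hh x)) =ᵐ[volume.restrict Ω]
      (fun x => μ x * dot3 (Ht x - H x) (Ht x - H x)) +
        (fun x => 2 * dot3 (Ht x - H x) (curl3 e x)) +
        fun x => μ x * dot3 (H x - Hh x) (H x - Hh x) :=
    hcurl.mono fun x hx => by
      simp only [Pi.add_apply, ← hx]
      exact mul_dot3_sub_self_eq _ _ _ _
  obtain ⟨hT, hle⟩ := integrable_and_integral_le_of_ae_eq_add hexpand hfin hA0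
    (hB.const_mul 2) (by rw [integral_const_mul, hB0, mul_zero]) hD
  exact ⟨hD, hT, hle⟩

theorem constant_free_reliability
    (Ω : Set (Fin 3 → ℝ)) (hΩ : IsOpen Ω)
    (μ : (Fin 3 → ℝ) → ℝ) (hμ : Measurable μ)
    (μ₀ μ₁ : ℝ) (hμ₀ : 0 < μ₀)
    (hbound : ∀ᵐ x ∂volume, x ∈ Ω → μ₀ ≤ μ x ∧ μ x ≤ μ₁)
    (H Hh Ht j : (Fin 3 → ℝ) → (Fin 3 → ℝ))
    (hHloc : LocallyIntegrableOn H Ω volume)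
    (hHhloc : LocallyIntegrableOn Hh Ω volume)
    (hHtloc : LocallyIntegrableOn Ht Ω volume)
    (hjloc : LocallyIntegrableOn j Ω volume)
    (hH : HasWeakCurlOn H j Ω) (hHt : HasWeakCurlOn Ht j Ω)
    (e : (Fin 3 → ℝ) → (Fin 3 → ℝ))
    (he : ContDiff ℝ 1 e) (hesupp : HasCompactSupport e) (heΩ : tsupport e ⊆ Ω)
    (hrep : ∀ᵐ x ∂volume, x ∈ Ω → μ x • (H x - Hh x) = curl3 e x)
    (hfin : IntegrableOn (fun x => μ x * dot3 (Ht x - H x) (Ht x - H x)) Ω volume) :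
    IntegrableOn (fun x => μ x * dot3 (H x - Hh x) (H x - Hh x)) Ω volume ∧
    IntegrableOn (fun x => μ x * dot3 (Ht x - Hh x) (Ht x - Hh x)) Ω volume ∧
    ∫ x in Ω, μ x * dot3 (H x - Hh x) (H x - Hh x)
      ≤ ∫ x in Ω, μ x * dot3 (Ht x - Hh x) (Ht x - Hh x) :=
  constant_free_reliability_general Ω hΩ μ μ₀ μ₁ hμ₀ hbound H Hh Ht j hHloc hHhloc hH hHt e he
    hesupp heΩ hrep hfin
end

section
/- Polynomial exactness of the gradient at the Nédélec stage: let k ≥ 1 and let A : ℝ³ → ℝ³ be of Nédélec form R_k. If curl A = 0 everywhere on ℝ³, then there exists a real polynomial ψ of total degree at most k in three variables such that A = ∇ψ everywhere on ℝ³. -/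
open MeasureTheory

/-- The divergence of a vector field on ℝ³. -/
noncomputable def div3 (F : (Fin 3 → ℝ) → (Fin 3 → ℝ)) (x : Fin 3 → ℝ) : ℝ :=
  ∑ i, pd3 (fun y => F y i) i x

/-- The gradient of a scalar function on ℝ³. -/
noncomputable def grad3 (f : (Fin 3 → ℝ) → ℝ) (x : Fin 3 → ℝ) : Fin 3 → ℝ :=
  fun i => fderiv ℝ f x (Pi.single i 1)

/-- Cross product on ℝ³. -/
def cross3 (a b : Fin 3 → ℝ) : Fin 3 → ℝ :=
  ![a 1 * b 2 - a 2 * b 1, a 2 * b 0 - a 0 * b 2, a 0 * b 1 - a 1 * b 0]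

/-- `f` is (the evaluation of) a real polynomial in three variables of total degree ≤ k. -/
def IsPolyFun3 (k : ℕ) (f : (Fin 3 → ℝ) → ℝ) : Prop :=
  ∃ p : MvPolynomial (Fin 3) ℝ, p.totalDegree ≤ k ∧ ∀ x, f x = MvPolynomial.eval x p

/-- `A` is of Nédélec form `R_k`: `A x = a x + x × b x` with the components of `a, b`
polynomials of total degree at most `k - 1`. -/
def IsNedelec (k : ℕ) (A : (Fin 3 → ℝ) → (Fin 3 → ℝ)) : Prop :=
  ∃ a b : (Fin 3 → ℝ) → (Fin 3 → ℝ),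
    (∀ i, IsPolyFun3 (k - 1) (fun x => a x i)) ∧
    (∀ i, IsPolyFun3 (k - 1) (fun x => b x i)) ∧
    ∀ x, A x = a x + cross3 x (b x)

/-- `u` is of Raviart–Thomas form `D_k`: `u x = v x + (w x) • x` with the components of `v`
and the scalar `w` polynomials of total degree at most `k - 1`. -/
def IsRT (k : ℕ) (u : (Fin 3 → ℝ) → (Fin 3 → ℝ)) : Prop :=
  ∃ (v : (Fin 3 → ℝ) → (Fin 3 → ℝ)) (w : (Fin 3 → ℝ) → ℝ),
    (∀ i, IsPolyFun3 (k - 1) (fun x => v x i)) ∧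
    IsPolyFun3 (k - 1) w ∧
    ∀ x, u x = v x + w x • x

/-- The standard reference tetrahedron in ℝ³. -/
def refTet : Set (Fin 3 → ℝ) := {x | (∀ i, 0 ≤ x i) ∧ ∑ i, x i ≤ 1}

/-!
If `A` is curl-free, its components `Pⱼ` are polynomials with `∂ᵢPⱼ = ∂ⱼPᵢ`, and
`S = x · A = x · a` has degree at most `k` because `x · (x × b) = 0`. For the Euler operator
`E = ∑ xᵢ ∂ᵢ` the symmetry gives `∂ⱼS = (1 + E) Pⱼ`, while `∂ⱼ ∘ E = (1 + E) ∘ ∂ⱼ` always. Hence a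
solution `ψ` of `E ψ = S`, obtained by dividing the degree-`n` part of `S` by `n`, satisfies
`(1 + E)(∂ⱼψ - Pⱼ) = 0`; as `1 + E` multiplies the degree-`n` part by `n + 1`, it is injective,
so `∇ψ = A`, and `deg ψ ≤ deg S ≤ k`.
-/

namespace MvPolynomial

section CommRing

variable {σ R : Type*} [CommRing R]

theorem pderiv_pderiv_comm (i j : σ) (p : MvPolynomial σ R) :
    pderiv i (pderiv j p) = pderiv j (pderiv i p) := by
  classical
  have hbracket : ⁅pderiv i, pderiv j⁆ = (0 : Derivation R (MvPolynomial σ R) (MvPolynomial σ R)) :=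
    derivation_ext fun k => by
      rw [Derivation.commutator_apply]; simp [pderiv_X, Pi.single_apply, apply_ite]
  have h := congr($hbracket p)
  rwa [Derivation.commutator_apply, Derivation.zero_apply, sub_eq_zero] at h

variable [Fintype σ]

noncomputable def euler : MvPolynomial σ R →ₗ[R] MvPolynomial σ R :=
  ∑ i, LinearMap.mulLeft R (X i) ∘ₗ (pderiv i).toLinearMap

theorem euler_apply (p : MvPolynomial σ R) : euler p = ∑ i, X i * pderiv i p := by
  simp [euler]

theorem pderiv_euler (j : σ) (p : MvPolynomial σ R) :
    pderiv j (euler p) = pderiv j p + euler (pderiv j p) := by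
  classical
  simp [euler_apply, pderiv_X, Pi.single_apply, Finset.sum_add_distrib, pderiv_pderiv_comm j,
    add_comm]

theorem euler_homogeneousComponent (n : ℕ) (p : MvPolynomial σ R) :
    euler (homogeneousComponent n p) = n • homogeneousComponent n p := by
  rw [euler_apply, (homogeneousComponent_isHomogeneous n p).sum_X_mul_pderiv]

theorem homogeneousComponent_euler (n : ℕ) (p : MvPolynomial σ R) :
    homogeneousComponent n (euler p) = n • homogeneousComponent n p := by
  conv_lhs => rw [← sum_homogeneousComponent p]
  simp only [map_sum, euler_homogeneousComponent, map_nsmul,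
    homogeneousComponent_of_mem (homogeneousComponent_isHomogeneous _ p)]
  simp only [smul_ite, smul_zero, Finset.sum_ite_eq, Finset.mem_range]
  split_ifs with hn
  · rfl
  · rw [homogeneousComponent_eq_zero _ _ (by omega), smul_zero]

theorem eq_zero_of_add_euler_eq_zero [IsDomain R] [CharZero R] {p : MvPolynomial σ R}
    (h : p + euler p = 0) : p = 0 := by
  rw [← sum_homogeneousComponent p]
  refine Finset.sum_eq_zero fun n _ => ?_
  have hn := congr(homogeneousComponent n $h)
  rw [map_add, homogeneousComponent_euler, map_zero, ← succ_nsmul'] at hn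
  simpa [Nat.cast_add_one_ne_zero] using hn

end CommRing

section Field

variable {σ R : Type*} [Field R]

noncomputable def eulerPotential (S : MvPolynomial σ R) : MvPolynomial σ R :=
  ∑ n ∈ Finset.range S.totalDegree, ((n : R) + 1)⁻¹ • homogeneousComponent (n + 1) S

theorem totalDegree_eulerPotential_le (S : MvPolynomial σ R) :
    (eulerPotential S).totalDegree ≤ S.totalDegree := by
  refine (totalDegree_finsetSum _ _).trans (Finset.sup_le fun n hn => ?_)
  refine (totalDegree_smul_le _ _).trans ?_
  exact (homogeneousComponent_isHomogeneous _ S).totalDegree_le.trans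
    (Finset.mem_range.mp hn)

variable [Fintype σ]

theorem euler_eulerPotential [CharZero R] {S : MvPolynomial σ R} (hS : constantCoeff S = 0) :
    euler (eulerPotential S) = S := by
  have hsmul : ∀ n : ℕ, ((n : R) + 1)⁻¹ • (n + 1) • homogeneousComponent (n + 1) S =
      homogeneousComponent (n + 1) S := fun n => by
    rw [← Nat.cast_smul_eq_nsmul R, smul_smul, Nat.cast_add_one, inv_mul_cancel₀
      (Nat.cast_add_one_ne_zero n), one_smul]
  conv_rhs => rw [← sum_homogeneousComponent S, Finset.sum_range_succ',
    homogeneousComponent_zero, ← constantCoeff_eq, hS, C_0, add_zero]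
  simp only [eulerPotential, map_sum, map_smul, euler_homogeneousComponent, hsmul]

theorem exists_pderiv_eq_of_pderiv_comm [CharZero R] (P : σ → MvPolynomial σ R)
    (hP : ∀ i j, pderiv i (P j) = pderiv j (P i)) :
    ∃ ψ : MvPolynomial σ R, ψ.totalDegree ≤ (∑ i, X i * P i).totalDegree ∧
      ∀ j, pderiv j ψ = P j := by
  classical
  set S := ∑ i, X i * P i
  have hpderivS : ∀ j, pderiv j S = P j + euler (P j) := fun j => by
    simp [S, euler_apply, pderiv_X, Pi.single_apply, Finset.sum_add_distrib, hP j,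
      add_comm]
  have hS : constantCoeff S = 0 := by simp [S]
  refine ⟨eulerPotential S, totalDegree_eulerPotential_le S, fun j => ?_⟩
  rw [← sub_eq_zero]
  apply eq_zero_of_add_euler_eq_zero
  rw [map_sub, sub_add_sub_comm, ← pderiv_euler, euler_eulerPotential hS, hpderivS, sub_self]

end Field

section Calculus

variable {𝕜 σ : Type*} [NontriviallyNormedField 𝕜] [Fintype σ]

theorem hasFDerivAt_eval (p : MvPolynomial σ 𝕜) (x : σ → 𝕜) :
    HasFDerivAt (fun y => eval y p)
      (∑ i, eval x (pderiv i p) • ContinuousLinearMap.proj (R := 𝕜) (φ := fun _ : σ => 𝕜) i)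
      x := by
  classical
  induction p using MvPolynomial.induction_on with
  | C a =>
    simp only [eval_C]
    refine (hasFDerivAt_const (𝕜 := 𝕜) a x).congr_fderiv ?_
    ext v
    simp
  | add p q hp hq =>
    simp only [map_add]
    refine (hp.fun_add hq).congr_fderiv ?_
    ext v
    simp [add_mul, Finset.sum_add_distrib]
  | mul_X p n hp =>
    simp only [eval_mul, eval_X]
    refine (hp.fun_mul (hasFDerivAt_apply n x)).congr_fderiv ?_
    ext v
    simp [pderiv_X, Pi.single_apply, apply_ite (eval x), add_mul, Finset.sum_add_distrib,
      Finset.mul_sum, mul_assoc]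

theorem fderiv_eval_single [DecidableEq σ] (p : MvPolynomial σ 𝕜) (x : σ → 𝕜) (i : σ) :
    fderiv 𝕜 (fun y => eval y p) x (Pi.single i 1) = eval x (pderiv i p) := by
  simp [(hasFDerivAt_eval p x).fderiv, Pi.single_apply]

end Calculus

end MvPolynomial

namespace IsPolyFun3

variable {m n : ℕ} {f g : (Fin 3 → ℝ) → ℝ}

theorem mono (hf : IsPolyFun3 m f) (hmn : m ≤ n) : IsPolyFun3 n f := by
  obtain ⟨p, hp, hfp⟩ := hf
  exact ⟨p, hp.trans hmn, hfp⟩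

theorem add (hf : IsPolyFun3 n f) (hg : IsPolyFun3 n g) : IsPolyFun3 n (fun x => f x + g x) := by
  obtain ⟨p, hp, hfp⟩ := hf
  obtain ⟨q, hq, hgq⟩ := hg
  exact ⟨p + q, (MvPolynomial.totalDegree_add p q).trans (max_le hp hq), by simp [hfp, hgq]⟩

theorem sub (hf : IsPolyFun3 n f) (hg : IsPolyFun3 n g) : IsPolyFun3 n (fun x => f x - g x) := by
  obtain ⟨p, hp, hfp⟩ := hf
  obtain ⟨q, hq, hgq⟩ := hg
  exact ⟨p - q, (MvPolynomial.totalDegree_sub p q).trans (max_le hp hq), by simp [hfp, hgq]⟩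

theorem mul (hf : IsPolyFun3 m f) (hg : IsPolyFun3 n g) :
    IsPolyFun3 (m + n) (fun x => f x * g x) := by
  obtain ⟨p, hp, hfp⟩ := hf
  obtain ⟨q, hq, hgq⟩ := hg
  exact ⟨p * q, (MvPolynomial.totalDegree_mul p q).trans (add_le_add hp hq), by simp [hfp, hgq]⟩

theorem sum {ι : Type*} (s : Finset ι) {F : ι → (Fin 3 → ℝ) → ℝ}
    (hF : ∀ i ∈ s, IsPolyFun3 n (F i)) : IsPolyFun3 n (fun x => ∑ i ∈ s, F i x) := by
  classical
  induction s using Finset.induction_on with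
  | empty => exact ⟨0, by simp, by simp⟩
  | insert i s hi ih =>
    simp only [Finset.sum_insert hi]
    exact (hF i (s.mem_insert_self i)).add (ih fun j hj => hF j (Finset.mem_insert_of_mem hj))

theorem coord (i : Fin 3) : IsPolyFun3 1 (fun x => x i) :=
  ⟨MvPolynomial.X i, (MvPolynomial.totalDegree_X i).le, by simp⟩

end IsPolyFun3

theorem dot3_cross3_self (x b : Fin 3 → ℝ) : dot3 x (cross3 x b) = 0 := by
  simp [dot3, cross3, Fin.sum_univ_three]
  ring

namespace IsNedelec

variable {k : ℕ} {A : (Fin 3 → ℝ) → (Fin 3 → ℝ)}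

theorem isPolyFun3_apply (hA : IsNedelec k A) (hk : 1 ≤ k) (i : Fin 3) :
    IsPolyFun3 k (fun x => A x i) := by
  obtain ⟨a, b, ha, hb, hAab⟩ := hA
  have hxb : ∀ j l, IsPolyFun3 k (fun x => x j * b x l) := fun j l =>
    ((IsPolyFun3.coord j).mul (hb l)).mono (by omega)
  simp only [hAab, Pi.add_apply]
  fin_cases i <;> exact ((ha _).mono (by omega)).add ((hxb _ _).sub (hxb _ _))

theorem isPolyFun3_dot3 (hA : IsNedelec k A) (hk : 1 ≤ k) :
    IsPolyFun3 k (fun x => dot3 x (A x)) := by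
  obtain ⟨a, b, ha, hb, hAab⟩ := hA
  have hdot : ∀ x, dot3 x (A x) = ∑ i, x i * a x i := fun x => by
    simpa [dot3, hAab, mul_add, Finset.sum_add_distrib] using dot3_cross3_self x (b x)
  simp only [hdot]
  exact IsPolyFun3.sum _ fun i _ => ((IsPolyFun3.coord i).mul (ha i)).mono (by omega)

end IsNedelec

open MvPolynomial

theorem pd3_eval (p : MvPolynomial (Fin 3) ℝ) (i : Fin 3) (x : Fin 3 → ℝ) :
    pd3 (fun y => eval y p) i x = eval x (pderiv i p) :=
  fderiv_eval_single p x i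

theorem grad3_eval (p : MvPolynomial (Fin 3) ℝ) (x : Fin 3 → ℝ) :
    grad3 (fun y => eval y p) x = fun i => eval x (pderiv i p) :=
  funext (fderiv_eval_single p x)

theorem pderiv_comm_of_curl3_eq_zero (P : Fin 3 → MvPolynomial (Fin 3) ℝ)
    (h : ∀ x, curl3 (fun y i => eval y (P i)) x = 0) (i j : Fin 3) :
    pderiv i (P j) = pderiv j (P i) := by
  have hcomp : ∀ x, eval x (pderiv 1 (P 2)) = eval x (pderiv 2 (P 1)) ∧
      eval x (pderiv 2 (P 0)) = eval x (pderiv 0 (P 2)) ∧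
      eval x (pderiv 0 (P 1)) = eval x (pderiv 1 (P 0)) := fun x => by
    simpa [curl3, pd3_eval, sub_eq_zero] using h x
  have h₀ := MvPolynomial.funext fun x => (hcomp x).1
  have h₁ := MvPolynomial.funext fun x => (hcomp x).2.1
  have h₂ := MvPolynomial.funext fun x => (hcomp x).2.2
  fin_cases i <;> fin_cases j <;> simp [h₀, h₁, h₂]

theorem nedelec_curlfree_is_grad (k : ℕ) (hk : 1 ≤ k)
    (A : (Fin 3 → ℝ) → (Fin 3 → ℝ)) (hA : IsNedelec k A)
    (hcurl : ∀ x, curl3 A x = 0) :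
    ∃ ψ : MvPolynomial (Fin 3) ℝ, ψ.totalDegree ≤ k ∧
      ∀ x, A x = grad3 (fun y => MvPolynomial.eval y ψ) x := by
  choose P _ hAP using hA.isPolyFun3_apply hk
  obtain ⟨S, hSdeg, hS⟩ := hA.isPolyFun3_dot3 hk
  have hA_eq : A = fun x i => eval x (P i) := funext fun x => funext fun i => hAP i x
  have hS_eq : S = ∑ i, X i * P i :=
    MvPolynomial.funext fun x => by simp [← hS, dot3, hA_eq]
  subst hA_eq
  obtain ⟨ψ, hψdeg, hψ⟩ :=
    exists_pderiv_eq_of_pderiv_comm P (pderiv_comm_of_curl3_eq_zero P hcurl)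
  exact ⟨ψ, hψdeg.trans (hS_eq ▸ hSdeg), fun x => by simp [grad3_eval, hψ]⟩
end
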